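/- For every integer n ≥ 2 and all real x, y, the continuous-analogue Pochhammer symbol satisfies the recursion r̃(x, y, n+1) = x · r̃(x, (n²/(n-1)²)·y, n) + n^{2n} · x · y^n / (2^n · n!). -/
import Mathlib


/-- The continuous-analogue Pochhammer symbol
`r̃(x,y,n) = Σ_{k=1}^{n} ((n-1)^{2(n-k)} / (2^{n-k} (n-k)!)) x^k y^{n-k}`,
with `r̃(x,y,0) = 1`. -/
noncomputable def rtilde (x y : ℝ) (n : ℕ) : ℝ :=
  if n = 0 then 1 else
    ∑ k ∈ Finset.Icc 1 n,
      ((n : ℝ) - 1) ^ (2 * (n - k)) / (2 ^ (n - k) * (Nat.factorial (n - k) : ℝ))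
        * x ^ k * y ^ (n - k)

/-- For `n ≥ 2`, `r̃(x,y,n+1) = x · r̃(x, (n²/(n-1)²)y, n) + n^{2n} x y^n / (2^n n!)`. -/
theorem rtilde_recursion (n : ℕ) (hn : 2 ≤ n) (x y : ℝ) :
    rtilde x y (n + 1) =
      x * rtilde x ((n : ℝ) ^ 2 / ((n : ℝ) - 1) ^ 2 * y) n +
        (n : ℝ) ^ (2 * n) * x * y ^ n / (2 ^ n * (Nat.factorial n : ℝ)) := by
  have hn0 : n ≠ 0 := by omega
  have hn2 : (2:ℝ) ≤ (n:ℝ) := by exact_mod_cast hn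
  have hne : ((n:ℝ) - 1) ≠ 0 := by nlinarith
  rw [rtilde, rtilde, if_neg hn0, if_neg (by omega : n + 1 ≠ 0)]
  rw [← Finset.Ico_add_one_right_eq_Icc, ← Finset.Ico_add_one_right_eq_Icc 1 n, Finset.sum_Ico_eq_sum_range, Finset.sum_Ico_eq_sum_range]
  have h1 : n + 1 + 1 - 1 = n + 1 := by omega
  have h2 : n + 1 - 1 = n := by omega
  rw [h1, h2, Finset.sum_range_succ', Finset.mul_sum]
  have key : ∀ i, ((↑(n + 1) : ℝ) - 1) ^ (2 * (n + 1 - (1 + (i + 1)))) /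
      (2 ^ (n + 1 - (1 + (i + 1))) * (Nat.factorial (n + 1 - (1 + (i + 1))) : ℝ)) *
      x ^ (1 + (i + 1)) * y ^ (n + 1 - (1 + (i + 1))) =
      x * (((n : ℝ) - 1) ^ (2 * (n - (1 + i))) /
        (2 ^ (n - (1 + i)) * (Nat.factorial (n - (1 + i)) : ℝ)) * x ^ (1 + i) *
        ((n : ℝ) ^ 2 / ((n : ℝ) - 1) ^ 2 * y) ^ (n - (1 + i))) := by
    intro i
    have e1 : n + 1 - (1 + (i + 1)) = n - (1 + i) := by omega
    rw [e1]
    push_cast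
    rw [show ((n:ℝ) + 1 - 1) = (n:ℝ) by ring]
    rw [mul_pow, div_pow, pow_mul, pow_mul, ← pow_mul ((n:ℝ)-1)]
    field_simp
    ring
  rw [Finset.sum_congr rfl (fun i _ => key i)]
  congr 1
  have e0 : n + 1 - (1 + 0) = n := by omega
  rw [e0]
  push_cast
  ring
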